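/- Assume Ric_G(e) < 0 (so ρ ≥ 1) and assume property (♠). Then every set E' of permissible insertions with Ric_{G+E'}(e) > 0 satisfies |E'| ≥ (ρ+1)/(2b), where b = q/(deg_G(v)+1). -/

import Mathlib

open Finset
open scoped Classical

variable {V : Type*}

/-- The open neighborhood of `u` in `G`, as a finset. -/
noncomputable def nbrF [Fintype V] (G : SimpleGraph V) (u : V) : Finset V :=
  Finset.univ.filter fun x => G.Adj u x

/-- The degree of `u` in `G`. -/
noncomputable def degG [Fintype V] (G : SimpleGraph V) (u : V) : ℕ := (nbrF G u).card

/-- The closed neighborhood `N[u]` of `u` in `G`. -/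
noncomputable def cnbr [Fintype V] (G : SimpleGraph V) (u : V) : Finset V :=
  insert u (nbrF G u)

/-- A transport plan for `(G,u,v)`: nonnegative, with row sums `1/(deg u + 1)` over
`N[u]` and column sums `1/(deg v + 1)` over `N[v]`. -/
def IsPlanG [Fintype V] (G : SimpleGraph V) (u v : V) (z : V → V → ℝ) : Prop :=
  (∀ x y, 0 ≤ z x y) ∧
  (∀ x ∈ cnbr G u, ∑ y ∈ cnbr G v, z x y = 1 / ((degG G u : ℝ) + 1)) ∧
  (∀ y ∈ cnbr G v, ∑ x ∈ cnbr G u, z x y = 1 / ((degG G v : ℝ) + 1))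

/-- The cost of a transport plan, with respect to shortest-path distance in `G`. -/
noncomputable def planCostG [Fintype V] (G : SimpleGraph V) (u v : V) (z : V → V → ℝ) : ℝ :=
  ∑ x ∈ cnbr G u, ∑ y ∈ cnbr G v, (G.dist x y : ℝ) * z x y

/-- The earth mover's distance `EMD_G(u,v)`: the minimum cost of a transport plan. -/
noncomputable def EMDG [Fintype V] (G : SimpleGraph V) (u v : V) : ℝ :=
  sInf {t | ∃ z, IsPlanG G u v z ∧ planCostG G u v z = t}

/-- The Ollivier–Ricci curvature of the edge `{u,v}`. -/
noncomputable def RicG [Fintype V] (G : SimpleGraph V) (u v : V) : ℝ :=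
  1 - EMDG G u v

/-- The graph obtained from `G` by inserting every permissible pair `{x,y}` with
`x ∈ N_G(u)\{v}`, `y ∈ N_G(v)\{u}`, `x ≠ y`, `{x,y} ∉ E(G)`, as a new edge. -/
def addPerm (G : SimpleGraph V) (u v : V) : SimpleGraph V :=
  G ⊔ SimpleGraph.fromRel (fun x y => G.Adj u x ∧ x ≠ v ∧ G.Adj v y ∧ y ≠ u)
/-!
A plan `z` witnessing `EMD_{G'}(u,v) < 1` is also a plan for `G`, because `N[u]`, `N[v]` and the
degrees are unchanged.  Its `G`-cost exceeds its `G'`-cost by `∑ (d_G - d_{G'}) z`.  A pair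
`(x,y) ∈ N[u] × N[v]` whose distance drops has `y` incident to a new edge (this is where (♠) for
`v` enters), and the drop is at most `2`, and at most `1` unless that new edge leaves `N[v]`.
Charging each new edge `1` at each end in `N[v]`, or `2` at its only end in `N[v]`, every column
of `z` (of mass `1/(deg v + 1)`) is paid for, and each new edge is charged at most `2` in total.
Hence `EMD_G(u,v) < 1 + 2|E'|/(deg v + 1)`, which after multiplying by `q = b (deg v + 1)` is
`ρ < 2b|E'|`.
-/

section Neighborhoods

variable [Fintype V] {G : SimpleGraph V} {a u v x y : V}

theorem mem_cnbr : x ∈ cnbr G a ↔ x = a ∨ G.Adj a x := by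
  simp [cnbr, nbrF]

theorem self_mem_cnbr : a ∈ cnbr G a := mem_cnbr.2 (Or.inl rfl)

theorem mem_cnbr_of_adj (h : G.Adj a x) : x ∈ cnbr G a := mem_cnbr.2 (Or.inr h)

theorem card_cnbr (G : SimpleGraph V) (a : V) : #(cnbr G a) = degG G a + 1 :=
  card_insert_of_notMem (by simp [nbrF])

theorem exists_walk_length_le_one_of_mem_cnbr (hx : x ∈ cnbr G a) :
    ∃ p : G.Walk x a, p.length ≤ 1 := by
  rcases mem_cnbr.1 hx with rfl | h
  · exact ⟨.nil, by simp⟩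
  · exact ⟨h.symm.toWalk, by simp⟩

theorem exists_walk_length_le_of_mem_cnbr {b : V} (hx : x ∈ cnbr G a) (hy : y ∈ cnbr G b)
    (p : G.Walk a b) : ∃ q : G.Walk x y, q.length ≤ p.length + 2 := by
  obtain ⟨p₁, h₁⟩ := exists_walk_length_le_one_of_mem_cnbr hx
  obtain ⟨p₂, h₂⟩ := exists_walk_length_le_one_of_mem_cnbr hy
  refine ⟨p₁.append (p.append p₂.reverse), ?_⟩
  simp only [SimpleGraph.Walk.length_append, SimpleGraph.Walk.length_reverse]
  omega

theorem dist_le_two_of_mem_cnbr (hx : x ∈ cnbr G a) (hy : y ∈ cnbr G a) : G.dist x y ≤ 2 := by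
  obtain ⟨q, hq⟩ := exists_walk_length_le_of_mem_cnbr hx hy .nil
  exact (SimpleGraph.dist_le q).trans (by simpa using hq)

theorem reachable_and_dist_le_three (huv : G.Adj u v) (hx : x ∈ cnbr G u) (hy : y ∈ cnbr G v) :
    G.Reachable x y ∧ G.dist x y ≤ 3 := by
  obtain ⟨q, hq⟩ := exists_walk_length_le_of_mem_cnbr hx hy huv.toWalk
  exact ⟨⟨q⟩, (SimpleGraph.dist_le q).trans (by simpa using hq)⟩

end Neighborhoods

theorem SimpleGraph.exists_adj_adj_of_dist_eq_two {G : SimpleGraph V} {x y : V}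
    (h : G.dist x y = 2) : ∃ w, G.Adj x w ∧ G.Adj w y := by
  have hr : G.Reachable x y := .of_dist_ne_zero (by omega)
  obtain ⟨-, -, w, hw⟩ := edist_eq_two_iff.1 (by rw [← hr.coe_dist_eq_edist, h]; rfl)
  rw [G.mem_commonNeighbors] at hw
  exact ⟨w, hw.1, hw.2.symm⟩

theorem addPerm_adj {G : SimpleGraph V} {u v x y : V} :
    (addPerm G u v).Adj x y ↔ G.Adj x y ∨ x ≠ y ∧
      ((G.Adj u x ∧ x ≠ v ∧ G.Adj v y ∧ y ≠ u) ∨ (G.Adj u y ∧ y ≠ v ∧ G.Adj v x ∧ x ≠ u)) := by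
  simp [addPerm]

section Insertions

variable [Fintype V] {G G' : SimpleGraph V} {u v : V}

theorem nbrF_eq_of_le_addPerm (h₁ : G ≤ G') (h₂ : G' ≤ addPerm G u v) :
    nbrF G' u = nbrF G u ∧ nbrF G' v = nbrF G v := by
  have hu : ∀ t, G'.Adj u t ↔ G.Adj u t := fun t =>
    ⟨fun h => by
      rcases addPerm_adj.1 (h₂ h) with h | ⟨-, ⟨h, -⟩ | ⟨-, -, -, h⟩⟩
      exacts [h, (G.irrefl h).elim, (h rfl).elim], fun h => h₁ h⟩
  have hv : ∀ t, G'.Adj v t ↔ G.Adj v t := fun t =>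
    ⟨fun h => by
      rcases addPerm_adj.1 (h₂ h) with h | ⟨-, ⟨-, h, -⟩ | ⟨-, -, h, -⟩⟩
      exacts [h, (h rfl).elim, (G.irrefl h).elim], fun h => h₁ h⟩
  simp [nbrF, hu, hv]

theorem isPlanG_congr {z : V → V → ℝ} (hu : nbrF G' u = nbrF G u) (hv : nbrF G' v = nbrF G v) :
    IsPlanG G' u v z ↔ IsPlanG G u v z := by
  simp only [IsPlanG, cnbr, degG, hu, hv]

theorem planCostG_eq_add_sum (z : V → V → ℝ) (hu : nbrF G' u = nbrF G u)
    (hv : nbrF G' v = nbrF G v) :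
    planCostG G u v z = planCostG G' u v z +
      ∑ x ∈ cnbr G u, ∑ y ∈ cnbr G v, ((G.dist x y : ℝ) - G'.dist x y) * z x y := by
  simp only [planCostG, cnbr, hu, hv, ← sum_add_distrib]
  exact sum_congr rfl fun x _ => sum_congr rfl fun y _ => by ring

end Insertions

section Transport

variable [Fintype V] {G : SimpleGraph V} {u v : V} {z : V → V → ℝ}

theorem exists_isPlanG (G : SimpleGraph V) (u v : V) : ∃ z, IsPlanG G u v z := by
  refine ⟨fun _ _ => 1 / (((degG G u : ℝ) + 1) * ((degG G v : ℝ) + 1)), fun _ _ => by positivity,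
    fun _ _ => ?_, fun _ _ => ?_⟩ <;>
  · rw [sum_const, card_cnbr, nsmul_eq_mul]
    push_cast
    field_simp

theorem planCostG_nonneg (hz : IsPlanG G u v z) : 0 ≤ planCostG G u v z :=
  sum_nonneg fun x _ => sum_nonneg fun y _ => mul_nonneg (Nat.cast_nonneg _) (hz.1 x y)

theorem EMDG_le_planCostG (hz : IsPlanG G u v z) : EMDG G u v ≤ planCostG G u v z :=
  csInf_le ⟨0, fun _ ⟨_, hz, hc⟩ => hc ▸ planCostG_nonneg hz⟩ ⟨z, hz, rfl⟩

theorem exists_isPlanG_planCostG_lt {t : ℝ} (h : EMDG G u v < t) :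
    ∃ z, IsPlanG G u v z ∧ planCostG G u v z < t := by
  obtain ⟨z, hz⟩ := exists_isPlanG G u v
  obtain ⟨_, ⟨z, hz, rfl⟩, hlt⟩ := exists_lt_of_csInf_lt (by exact ⟨_, z, hz, rfl⟩) h
  exact ⟨z, hz, hlt⟩

theorem IsPlanG.sum_sum_mul_le (hz : IsPlanG G u v z) {r : V → V → ℝ} {R : V → ℝ}
    (hr : ∀ x ∈ cnbr G u, ∀ y ∈ cnbr G v, r x y ≤ R y) :
    ∑ x ∈ cnbr G u, ∑ y ∈ cnbr G v, r x y * z x y ≤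
      (∑ y ∈ cnbr G v, R y) / ((degG G v : ℝ) + 1) := by
  rw [sum_comm, sum_div]
  refine sum_le_sum fun y hy => ?_
  calc ∑ x ∈ cnbr G u, r x y * z x y ≤ ∑ x ∈ cnbr G u, R y * z x y :=
        sum_le_sum fun x hx => mul_le_mul_of_nonneg_right (hr x hx y hy) (hz.1 x y)
    _ = R y / ((degG G v : ℝ) + 1) := by rw [← mul_sum, hz.2.2 y hy, mul_one_div]

end Transport

section Charging

variable (s : Finset V) (D : Finset (Sym2 V))

noncomputable def edgeCharge (e : Sym2 V) : ℕ := if ∀ t ∈ e, t ∈ s then 1 else 2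

noncomputable def vertexCharge (y : V) : ℕ := ∑ e ∈ D with y ∈ e, edgeCharge s e

variable {s D}

theorem one_le_edgeCharge (e : Sym2 V) : 1 ≤ edgeCharge s e := by
  unfold edgeCharge; split_ifs <;> omega

theorem edgeCharge_le_vertexCharge {e : Sym2 V} {y : V} (he : e ∈ D) (hy : y ∈ e) :
    edgeCharge s e ≤ vertexCharge s D y :=
  single_le_sum (f := edgeCharge s) (fun _ _ => Nat.zero_le _) (mem_filter.2 ⟨he, hy⟩)

theorem edgeCharge_mul_card_le_two {e : Sym2 V} (he : ¬ e.IsDiag) :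
    edgeCharge s e * #{t ∈ s | t ∈ e} ≤ 2 := by
  induction e using Sym2.ind with | _ a c =>
  have hac : a ≠ c := by simpa using he
  have hsub : {t ∈ s | t ∈ s(a, c)} ⊆ {a, c} := fun t ht => by simpa using (mem_filter.1 ht).2
  unfold edgeCharge
  split_ifs with hin
  · simpa [card_pair hac] using card_le_card hsub
  · push Not at hin
    obtain ⟨t, hte, hts⟩ := hin
    have hsub' : {t' ∈ s | t' ∈ s(a, c)} ⊆ ({a, c} : Finset V).erase t := fun t' ht' =>
      mem_erase.2 ⟨fun h => hts (h ▸ (mem_filter.1 ht').1), hsub ht'⟩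
    have := card_le_card hsub'
    rw [card_erase_of_mem (by simpa using hte), card_pair hac] at this
    omega

theorem sum_vertexCharge_le (hD : ∀ e ∈ D, ¬ e.IsDiag) :
    ∑ y ∈ s, vertexCharge s D y ≤ 2 * #D :=
  calc ∑ y ∈ s, vertexCharge s D y = ∑ e ∈ D, edgeCharge s e * #{t ∈ s | t ∈ e} := by
        simp only [vertexCharge, sum_filter]
        rw [sum_comm]
        refine sum_congr rfl fun e _ => ?_
        rw [← sum_filter, sum_const, smul_eq_mul, mul_comm]
    _ ≤ ∑ _e ∈ D, 2 := sum_le_sum fun e he => edgeCharge_mul_card_le_two (hD e he)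
    _ = 2 * #D := by rw [sum_const, smul_eq_mul, mul_comm]

end Charging

section DistanceDrop

variable [Fintype V] {G G' : SimpleGraph V} {u v x y : V}

theorem not_adj_of_dist_eq_three (huv : G.Adj u v) (h₂ : G' ≤ addPerm G u v)
    (hsp2 : ∀ x y : V, G.Adj v x → G.Adj v y → x ≠ u → y ≠ u → ¬ G.Adj x y)
    (hx : x ∈ cnbr G u) (hy : y ∈ cnbr G v) (h3 : G.dist x y = 3) {w : V}
    (hxw : G'.Adj x w) : ¬ G.Adj w y := by
  intro hwyG
  have hxv : x ∉ cnbr G v := fun h => by have := dist_le_two_of_mem_cnbr h hy; omega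
  have hyu : y ∉ cnbr G u := fun h => by have := dist_le_two_of_mem_cnbr hx h; omega
  have hvy : G.Adj v y := (mem_cnbr.1 hy).resolve_left fun h => hyu (h ▸ mem_cnbr_of_adj huv)
  have hxwG : ¬ G.Adj x w := fun h => by
    have := dist_le_two_of_mem_cnbr (mem_cnbr_of_adj h.symm) (mem_cnbr_of_adj hwyG)
    omega
  rcases addPerm_adj.1 (h₂ hxw) with h | ⟨-, ⟨-, -, hvw, hwu⟩ | ⟨-, -, hvx, -⟩⟩
  · exact hxwG h
  · exact hsp2 w y hvw hvy hwu (fun h => hyu (h ▸ self_mem_cnbr)) hwyG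
  · exact hxv (mem_cnbr_of_adj hvx)

theorem exists_new_edge_of_dist_lt (huv : G.Adj u v) (h₁ : G ≤ G') (h₂ : G' ≤ addPerm G u v)
    (hsp2 : ∀ x y : V, G.Adj v x → G.Adj v y → x ≠ u → y ≠ u → ¬ G.Adj x y)
    (hx : x ∈ cnbr G u) (hy : y ∈ cnbr G v) (hlt : G'.dist x y < G.dist x y) :
    ∃ e ∈ G'.edgeFinset \ G.edgeFinset, y ∈ e ∧
      G.dist x y ≤ G'.dist x y + edgeCharge (cnbr G v) e := by
  obtain ⟨hr, h3⟩ := reachable_and_dist_le_three huv hx hy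
  have hxy : x ≠ y := by rintro rfl; simp at hlt
  have hr' := hr.mono h₁
  have hpos := hr'.pos_dist_of_ne hxy
  by_cases hadj : G'.Adj x y
  · have hd' := SimpleGraph.dist_eq_one_iff_adj.2 hadj
    refine ⟨s(x, y), by simpa [hadj] using fun h => absurd (G.dist_eq_one_iff_adj.2 h) (by omega),
      Sym2.mem_mk_right x y, ?_⟩
    -- a drop by `2` means `x ∉ N[v]`, so the edge leaves `N[v]` and is charged `2`
    unfold edgeCharge
    split_ifs with hin
    · have := dist_le_two_of_mem_cnbr (hin x (Sym2.mem_mk_left x y)) hy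
      omega
    · omega
  · have h2 : G'.dist x y = 2 := by
      have := hr'.one_lt_dist_of_ne_of_not_adj hxy hadj
      omega
    obtain ⟨w, hxw, hwy⟩ := SimpleGraph.exists_adj_adj_of_dist_eq_two h2
    have hwyG := not_adj_of_dist_eq_three huv h₂ hsp2 hx hy (by omega) hxw
    have := one_le_edgeCharge (s := cnbr G v) s(w, y)
    exact ⟨s(w, y), by simpa [hwy] using hwyG, Sym2.mem_mk_right w y, by omega⟩

end DistanceDrop

theorem sum_sum_dist_sub_mul_le [Fintype V] {G G' : SimpleGraph V} {u v : V} {z : V → V → ℝ}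
    (huv : G.Adj u v) (h₁ : G ≤ G') (h₂ : G' ≤ addPerm G u v)
    (hsp2 : ∀ x y : V, G.Adj v x → G.Adj v y → x ≠ u → y ≠ u → ¬ G.Adj x y)
    (hz : IsPlanG G u v z) :
    ∑ x ∈ cnbr G u, ∑ y ∈ cnbr G v, ((G.dist x y : ℝ) - G'.dist x y) * z x y ≤
      2 * #(G'.edgeFinset \ G.edgeFinset) / ((degG G v : ℝ) + 1) := by
  set D := G'.edgeFinset \ G.edgeFinset
  have hdrop : ∀ x ∈ cnbr G u, ∀ y ∈ cnbr G v,
      G.dist x y ≤ G'.dist x y + vertexCharge (cnbr G v) D y := fun x hx y hy => by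
    by_cases hlt : G'.dist x y < G.dist x y
    · obtain ⟨e, he, hye, hle⟩ := exists_new_edge_of_dist_lt huv h₁ h₂ hsp2 hx hy hlt
      exact hle.trans (Nat.add_le_add_left (edgeCharge_le_vertexCharge he hye) _)
    · omega
  have hD : ∀ e ∈ D, ¬ e.IsDiag := fun e he =>
    G'.not_isDiag_of_mem_edgeSet (G'.mem_edgeFinset.1 (mem_sdiff.1 he).1)
  refine (hz.sum_sum_mul_le (R := fun y => (vertexCharge (cnbr G v) D y : ℝ))
    fun x hx y hy => ?_).trans ?_
  · rw [sub_le_iff_le_add']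
    exact_mod_cast hdrop x hx y hy
  · gcongr
    exact_mod_cast sum_vertexCharge_le hD

theorem SimpleGraph.ncard_edgeSet_sdiff [Fintype V] (G G' : SimpleGraph V) :
    (G'.edgeSet \ G.edgeSet).ncard = #(G'.edgeFinset \ G.edgeFinset) := by
  rw [← Set.ncard_coe_finset, coe_sdiff, coe_edgeFinset, coe_edgeFinset]

theorem div_le_of_lt_one_add_div {ρ : ℤ} {q b c n : ℕ} {E : ℝ}
    (hρ : (ρ : ℝ) = q * E - q) (hq : q = b * c) (hb : 0 < b) (hc : 0 < c)
    (hE : E < 1 + 2 * n / c) : ((ρ : ℝ) + 1) / (2 * b) ≤ n := by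
  have hc' : (0 : ℝ) < c := by exact_mod_cast hc
  have hb' : (0 : ℝ) < b := by exact_mod_cast hb
  have hEc : (E - 1) * c < 2 * n := (lt_div_iff₀ hc').1 (by linarith)
  have hlt : (ρ : ℝ) < 2 * b * n := by
    rw [hρ, hq]
    push_cast
    nlinarith
  have hle : ρ + 1 ≤ 2 * b * n := by exact_mod_cast hlt
  rw [div_le_iff₀ (by positivity)]
  exact_mod_cast (by linarith : (ρ + 1 : ℤ) ≤ n * (2 * b))

/-- A graph `G'` with `G ≤ G' ≤ addPerm G u v` is exactly `G + E'` for a set `E'` of permissible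
insertions, with `E' = E(G') \ E(G)`. -/
theorem stmt10_general [Fintype V] (G : SimpleGraph V) (u v : V) (huv : G.Adj u v)
    (q : ℕ) (hq : q = Nat.lcm (degG G u + 1) (degG G v + 1))
    (ρ : ℤ) (hρ : (ρ : ℝ) = (q : ℝ) * EMDG G u v - (q : ℝ))
    (b : ℕ) (hb : b = q / (degG G v + 1))
    (hsp2 : ∀ x y : V, G.Adj v x → G.Adj v y → x ≠ u → y ≠ u → ¬ G.Adj x y) :
    ∀ G' : SimpleGraph V, G ≤ G' → G' ≤ addPerm G u v → 0 < RicG G' u v →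
      ((ρ : ℝ) + 1) / (2 * (b : ℝ)) ≤ ((G'.edgeSet \ G.edgeSet).ncard : ℝ) := by
  intro G' h₁ h₂ hpos
  obtain ⟨hu, hv⟩ := nbrF_eq_of_le_addPerm h₁ h₂
  obtain ⟨z, hz', hcost⟩ := exists_isPlanG_planCostG_lt (t := 1) (by unfold RicG at hpos; linarith)
  have hz := (isPlanG_congr hu hv).1 hz'
  have hdvd : degG G v + 1 ∣ q := hq ▸ Nat.dvd_lcm_right _ _
  have hq₀ : 0 < q := hq ▸ Nat.lcm_pos (Nat.succ_pos _) (Nat.succ_pos _)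
  rw [G.ncard_edgeSet_sdiff]
  refine div_le_of_lt_one_add_div hρ (hb ▸ (Nat.div_mul_cancel hdvd).symm)
    (hb ▸ Nat.div_pos (Nat.le_of_dvd hq₀ hdvd) (Nat.succ_pos _)) (Nat.succ_pos _) ?_
  push_cast
  calc EMDG G u v ≤ planCostG G u v z := EMDG_le_planCostG hz
    _ = planCostG G' u v z +
        ∑ x ∈ cnbr G u, ∑ y ∈ cnbr G v, ((G.dist x y : ℝ) - G'.dist x y) * z x y :=
      planCostG_eq_add_sum z hu hv
    _ < 1 + 2 * #(G'.edgeFinset \ G.edgeFinset) / ((degG G v : ℝ) + 1) :=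
      add_lt_add_of_lt_of_le hcost (sum_sum_dist_sub_mul_le huv h₁ h₂ hsp2 hz)

/-- assume `Ric_G(e) < 0` and property (♠).  Then every set `E'` of
permissible insertions making the curvature of `e` positive has
`|E'| ≥ (ρ+1)/(2b)`, where `q = lcm(deg_G(u)+1, deg_G(v)+1)`,
`ρ = q·EMD_G(u,v) − q`, and `b = q/(deg_G(v)+1)`.  (A graph `G'` with
`G ≤ G' ≤ G*` is exactly `G + E'` for a set `E'` of permissible insertions, with
`E' = E(G') \ E(G)`.) -/
theorem stmt10 [Fintype V] (G : SimpleGraph V) (u v : V) (huv : G.Adj u v)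
    (hdeg : degG G u ≤ degG G v)
    (q : ℕ) (hq : q = Nat.lcm (degG G u + 1) (degG G v + 1))
    (ρ : ℤ) (hρ : (ρ : ℝ) = (q : ℝ) * EMDG G u v - (q : ℝ))
    (b : ℕ) (hb : b = q / (degG G v + 1))
    (hneg : RicG G u v < 0)
    (hsp1 : ∀ x y : V, G.Adj u x → G.Adj u y → x ≠ v → y ≠ v → ¬ G.Adj x y)
    (hsp2 : ∀ x y : V, G.Adj v x → G.Adj v y → x ≠ u → y ≠ u → ¬ G.Adj x y) :
    ∀ G' : SimpleGraph V, G ≤ G' → G' ≤ addPerm G u v → 0 < RicG G' u v →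
      ((ρ : ℝ) + 1) / (2 * (b : ℝ)) ≤ ((G'.edgeSet \ G.edgeSet).ncard : ℝ) :=
  stmt10_general G u v huv q hq ρ hρ b hb hsp2
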